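/- Let A, B be ordered dissections of [1,d] with A < B, whose cardinality vectors l = φ(A) and m = φ(B) satisfy m = ρ_{i,j}(l) for some 1 ≤ i < j ≤ d. Then there exist r ≥ 1, indices i = i_1 < i_2 < ⋯ < i_{r+1} = j and elements s_1,…,s_r of [1,d] with ε_A(s_κ) = i_{κ+1} for all 1 ≤ κ ≤ r, such that B = R_{i_1,s_1} ⋯ R_{i_r,s_r} A. -/
import Mathlib


/-- An ordered dissection of `{0,…,d-1}` (indexed from 0): a sequence of pairwise
disjoint subsets, vanishing from index `d` on, whose union is everything. -/
def IsDissection (d : ℕ) (A : ℕ → Finset (Fin d)) : Prop :=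
  (∀ i j, i ≠ j → Disjoint (A i) (A j)) ∧ (∀ k, d ≤ k → A k = ∅) ∧
    ∀ s : Fin d, ∃ i, s ∈ A i

/-- Dominance order on ordered dissections: each initial union of components of `A`
is contained in the corresponding one of `B`. -/
def DomD {d : ℕ} (A B : ℕ → Finset (Fin d)) : Prop :=
  ∀ i : ℕ, (Finset.range (i + 1)).biUnion A ⊆ (Finset.range (i + 1)).biUnion B

/-- `eps A s` is the index of the component of `A` containing `s`
(the least such index; it is unique for a dissection). -/
noncomputable def eps {d : ℕ} (A : ℕ → Finset (Fin d)) (s : Fin d) : ℕ :=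
  open scoped Classical in
  if h : ∃ i, s ∈ A i then Nat.find h else 0

/-- The simple raising operator `R_{i,s}`: move `s` into component `i`
if `eps A s > i`, otherwise do nothing. -/
noncomputable def Rop {d : ℕ} (i : ℕ) (s : Fin d) (A : ℕ → Finset (Fin d)) : ℕ → Finset (Fin d) :=
  if eps A s ≤ i then A
  else fun k =>
    if k = i then insert s (A k) else if k = eps A s then (A k).erase s else A k

/-- `φ(A)`: the tuple of component cardinalities. -/
def phi {d : ℕ} (A : ℕ → Finset (Fin d)) : ℕ → ℤ :=
  fun k => ((A k).card : ℤ)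

/-- Dominance order on integer tuples: all partial sums of `l` at most those of `m`. -/
def Dom (l m : ℕ → ℤ) : Prop :=
  ∀ i : ℕ, ∑ k ∈ Finset.range (i + 1), l k ≤ ∑ k ∈ Finset.range (i + 1), m k

/-- The simple raising operator ρ_{i,j} on integer tuples. -/
def rho (i j : ℕ) (l : ℕ → ℤ) : ℕ → ℤ :=
  if i < j then fun k => if k = i then l k + 1 else if k = j then l k - 1 else l k else l

section helpers
variable {d : ℕ}

lemma eps_eq {A : ℕ → Finset (Fin d)} (hA : IsDissection d A) {s : Fin d} {k : ℕ}
    (hs : s ∈ A k) : eps A s = k := by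
  classical
  have h : ∃ i, s ∈ A i := ⟨k, hs⟩
  rw [eps, dif_pos h, Nat.find_eq_iff]
  exact ⟨hs, fun m hm hmem => Finset.disjoint_left.mp (hA.1 m k (Nat.ne_of_lt hm)) hmem hs⟩

lemma eps_le {A : ℕ → Finset (Fin d)} {s : Fin d} {m : ℕ} (h : s ∈ A m) : eps A s ≤ m := by
  classical
  rw [eps, dif_pos ⟨m, h⟩]
  exact Nat.find_le h

lemma mem_eps {A : ℕ → Finset (Fin d)} {s : Fin d} (h : ∃ i, s ∈ A i) : s ∈ A (eps A s) := by
  classical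
  rw [eps, dif_pos h]
  exact Nat.find_spec h

lemma mem_Rop_of_ne {A : ℕ → Finset (Fin d)} {i' : ℕ} {s s' : Fin d} (h : s' ≠ s) (k : ℕ) :
    s' ∈ Rop i' s A k ↔ s' ∈ A k := by
  rw [Rop]
  split_ifs with h1
  · rfl
  · simp only []
    split_ifs <;> simp [Finset.mem_insert, Finset.mem_erase, h]

lemma eps_Rop_of_ne {A : ℕ → Finset (Fin d)} {i' : ℕ} {s s' : Fin d} (h : s' ≠ s) :
    eps (Rop i' s A) s' = eps A s' := by
  classical
  by_cases h1 : ∃ k, s' ∈ A k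
  · have h2 : ∃ k, s' ∈ Rop i' s A k := h1.imp fun k hk => (mem_Rop_of_ne h k).mpr hk
    rw [eps, eps, dif_pos h2, dif_pos h1]
    exact le_antisymm (Nat.find_le ((mem_Rop_of_ne h _).mpr (Nat.find_spec h1)))
      (Nat.find_le ((mem_Rop_of_ne h _).mp (Nat.find_spec h2)))
  · have h2 : ¬ ∃ k, s' ∈ Rop i' s A k := fun ⟨k, hk⟩ => h1 ⟨k, (mem_Rop_of_ne h k).mp hk⟩
    rw [eps, eps, dif_neg h2, dif_neg h1]

lemma comp_sdiff {A : ℕ → Finset (Fin d)} (hA : IsDissection d A) (k : ℕ) :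
    A k = (Finset.range (k+1)).biUnion A \ (Finset.range k).biUnion A := by
  ext x
  simp only [Finset.mem_sdiff, Finset.mem_biUnion, Finset.mem_range]
  constructor
  · intro hx
    refine ⟨⟨k, by omega, hx⟩, ?_⟩
    rintro ⟨m, hm, hxm⟩
    exact Finset.disjoint_left.mp (hA.1 m k (by omega)) hxm hx
  · rintro ⟨⟨m, hm, hxm⟩, h2⟩
    have : m = k := by
      by_contra hne
      exact h2 ⟨m, by omega, hxm⟩
    exact this ▸ hxm

lemma prefix_card {A : ℕ → Finset (Fin d)} (hA : IsDissection d A) (t : ℕ) :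
    (((Finset.range t).biUnion A).card : ℤ) = ∑ k ∈ Finset.range t, ((A k).card : ℤ) := by
  rw [Finset.card_biUnion (fun i _ j _ h => hA.1 i j h)]
  push_cast
  rfl

end helpers

lemma auxmain {d : ℕ} (B : ℕ → Finset (Fin d)) (hB : IsDissection d B) (j : ℕ) :
    ∀ (A : ℕ → Finset (Fin d)), IsDissection d A → DomD A B →
    ∀ i : ℕ, i < j → j < d → phi B = rho i j (phi A) →
    ∃ (r : ℕ) (I : ℕ → ℕ) (S : ℕ → Fin d),
      1 ≤ r ∧ I 0 = i ∧ I r = j ∧ (∀ k < r, I k < I (k + 1)) ∧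
      (∀ k < r, eps A (S k) = I (k + 1)) ∧ (∀ k < r, S k ∈ B (I k)) ∧
      B = ((List.range r).map (fun k => (I k, S k))).foldr
            (fun p C => Rop p.1 p.2 C) A := by
  induction j using Nat.strong_induction_on with
  | _ j ih =>
  intro A hA hAB i hij hjd hphi
  -- prefix subset
  have hPsub : ∀ t, (Finset.range t).biUnion A ⊆ (Finset.range t).biUnion B := by
    intro t
    cases t with
    | zero => simp
    | succ n => exact hAB n
  -- cardinalities of components of B
  have hcardB : ∀ k, ((B k).card : ℤ) =
      ((A k).card : ℤ) + (if k = i then 1 else 0) - (if k = j then 1 else 0) := by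
    intro k
    have h := congrFun hphi k
    simp only [phi, rho, if_pos hij] at h
    split_ifs at h ⊢ <;> omega
  -- prefix cardinality relation
  have hcard_pref : ∀ t, (((Finset.range t).biUnion B).card : ℤ) =
      ((Finset.range t).biUnion A).card + (if i < t then 1 else 0) - (if j < t then 1 else 0) := by
    intro t
    rw [prefix_card hA, prefix_card hB]
    rw [Finset.sum_congr rfl (fun k _ => hcardB k)]
    rw [Finset.sum_sub_distrib, Finset.sum_add_distrib,
      Finset.sum_ite_eq' (Finset.range t) i (fun _ => (1:ℤ)),
      Finset.sum_ite_eq' (Finset.range t) j (fun _ => (1:ℤ))]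
    simp [Finset.mem_range]
  have hQP_eq : ∀ t, t ≤ i ∨ j < t → (Finset.range t).biUnion B = (Finset.range t).biUnion A := by
    intro t ht
    have h := hcard_pref t
    have hc : ((Finset.range t).biUnion B).card = ((Finset.range t).biUnion A).card := by
      rcases ht with h' | h'
      · rw [if_neg (by omega : ¬ i < t), if_neg (by omega : ¬ j < t)] at h; omega
      · rw [if_pos (by omega : i < t), if_pos h'] at h; omega
    exact (Finset.eq_of_subset_of_card_le (hPsub t) hc.le).symm
  have hQP_card : ∀ t, i < t → t ≤ j →
      ((Finset.range t).biUnion B).card = ((Finset.range t).biUnion A).card + 1 := by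
    intro t h1 h2
    have h := hcard_pref t
    rw [if_pos h1, if_neg (by omega : ¬ j < t)] at h
    omega
  -- pick the extra element s
  have hkey : ∃ s, s ∈ (Finset.range j).biUnion B ∧ s ∉ (Finset.range j).biUnion A := by
    by_contra h
    push_neg at h
    have hsub : (Finset.range j).biUnion B ⊆ (Finset.range j).biUnion A := fun x hx => h x hx
    have := Finset.card_le_card hsub
    have := hQP_card j hij le_rfl
    omega
  obtain ⟨s, hsQ, hsP⟩ := hkey
  have hsAj : s ∈ A j := by
    have h1 : s ∈ (Finset.range (j+1)).biUnion A := by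
      rw [← hQP_eq (j+1) (Or.inr (by omega))]
      exact Finset.biUnion_subset_biUnion_of_subset_left B
        (Finset.range_subset_range.mpr (by omega)) hsQ
    obtain ⟨m, hm, hmem⟩ := Finset.mem_biUnion.mp h1
    rw [Finset.mem_range] at hm
    rcases Nat.lt_succ_iff_lt_or_eq.mp hm with h | h
    · exact absurd (Finset.mem_biUnion.mpr ⟨m, Finset.mem_range.mpr h, hmem⟩) hsP
    · exact h ▸ hmem
  have hepsAs : eps A s = j := eps_eq hA hsAj
  have hsEx : ∃ m, s ∈ B m := by
    obtain ⟨m, _, hmem⟩ := Finset.mem_biUnion.mp hsQ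
    exact ⟨m, hmem⟩
  set i' := eps B s with hi'def
  have hsBi' : s ∈ B i' := mem_eps hsEx
  have hi'j : i' < j := by
    obtain ⟨m, hm, hmem⟩ := Finset.mem_biUnion.mp hsQ
    rw [Finset.mem_range] at hm
    exact lt_of_le_of_lt (eps_le hmem) hm
  have hii' : i ≤ i' := by
    by_contra h
    push_neg at h
    have h1 : s ∈ (Finset.range (i'+1)).biUnion A := by
      rw [← hQP_eq (i'+1) (Or.inl (by omega))]
      exact Finset.mem_biUnion.mpr ⟨i', Finset.mem_range.mpr (by omega), hsBi'⟩
    exact hsP (Finset.biUnion_subset_biUnion_of_subset_left A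
      (Finset.range_subset_range.mpr (by omega)) h1)
  have hsPj : ∀ t, t ≤ j → s ∉ (Finset.range t).biUnion A := by
    intro t ht hmem
    exact hsP (Finset.biUnion_subset_biUnion_of_subset_left A
      (Finset.range_subset_range.mpr ht) hmem)
  rcases eq_or_lt_of_le hii' with heq | hlt
  · -- base case: i' = i, B = Rop i s A
    have hsBi : s ∈ B i := heq ▸ hsBi'
    have hQins : ∀ t, i < t → t ≤ j →
        (Finset.range t).biUnion B = insert s ((Finset.range t).biUnion A) := by
      intro t h1 h2
      have hsub : insert s ((Finset.range t).biUnion A) ⊆ (Finset.range t).biUnion B := by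
        intro x hx
        rcases Finset.mem_insert.mp hx with h' | h'
        · exact h' ▸ Finset.mem_biUnion.mpr ⟨i, Finset.mem_range.mpr h1, hsBi⟩
        · exact hPsub t h'
      have hns : s ∉ (Finset.range t).biUnion A := hsPj t h2
      refine (Finset.eq_of_subset_of_card_le hsub ?_).symm
      rw [Finset.card_insert_of_notMem hns, hQP_card t h1 h2]
    have hBR : B = Rop i s A := by
      funext k
      rw [Rop, if_neg (by rw [hepsAs]; omega)]
      simp only [hepsAs]
      by_cases hk1 : k < i
      · rw [if_neg (by omega), if_neg (by omega), comp_sdiff hB k, comp_sdiff hA k,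
          hQP_eq (k+1) (Or.inl (by omega)), hQP_eq k (Or.inl (by omega))]
      by_cases hk2 : k = i
      · subst hk2
        rw [if_pos rfl, comp_sdiff hB k, hQins (k+1) (by omega) (by omega),
          hQP_eq k (Or.inl le_rfl), comp_sdiff hA k]
        have hns : s ∉ (Finset.range k).biUnion A := hsPj k (by omega)
        ext x
        simp only [Finset.mem_sdiff, Finset.mem_insert]
        constructor
        · rintro ⟨h1 | h1, h2⟩
          · exact Or.inl h1
          · exact Or.inr ⟨h1, h2⟩
        · rintro (h1 | ⟨h1, h2⟩)
          · exact ⟨Or.inl h1, h1 ▸ hns⟩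
          · exact ⟨Or.inr h1, h2⟩
      by_cases hk3 : k < j
      · rw [if_neg hk2, if_neg (by omega), comp_sdiff hB k, comp_sdiff hA k,
          hQins (k+1) (by omega) (by omega), hQins k (by omega) (by omega)]
        have hns : s ∉ (Finset.range (k+1)).biUnion A := hsPj (k+1) (by omega)
        ext x
        simp only [Finset.mem_sdiff, Finset.mem_insert]
        constructor
        · rintro ⟨h1 | h1, h2⟩
          · exact absurd (Or.inl h1) h2
          · refine ⟨h1, fun h3 => h2 (Or.inr h3)⟩
        · rintro ⟨h1, h2⟩
          refine ⟨Or.inr h1, ?_⟩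
          rintro (h3 | h3)
          · exact hns (h3 ▸ h1)
          · exact h2 h3
      by_cases hk4 : k = j
      · subst hk4
        rw [if_neg hk2, if_pos rfl, comp_sdiff hB k, comp_sdiff hA k,
          hQP_eq (k+1) (Or.inr (by omega)), hQins k (by omega) le_rfl]
        ext x
        simp only [Finset.mem_sdiff, Finset.mem_insert, Finset.mem_erase]
        constructor
        · rintro ⟨h1, h2⟩
          exact ⟨fun h3 => h2 (Or.inl h3), h1, fun h3 => h2 (Or.inr h3)⟩
        · rintro ⟨h1, h2, h3⟩
          refine ⟨h2, ?_⟩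
          rintro (h4 | h4)
          · exact h1 h4
          · exact h3 h4
      · rw [if_neg hk2, if_neg hk4, comp_sdiff hB k, comp_sdiff hA k,
          hQP_eq (k+1) (Or.inr (by omega)), hQP_eq k (Or.inr (by omega))]
    refine ⟨1, fun k => if k = 0 then i else j, fun _ => s, le_rfl, by simp, by simp, ?_, ?_, ?_, ?_⟩
    · intro k hk
      have : k = 0 := by omega
      subst this
      norm_num
      exact hij
    · intro k hk
      have : k = 0 := by omega
      subst this
      norm_num
      exact hepsAs
    · intro k hk
      have : k = 0 := by omega
      subst this
      simp only [if_pos rfl]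
      exact hsBi
    · simp only [List.range_succ, List.range_zero, List.nil_append, List.map_cons,
        List.map_nil, List.foldr_cons, List.foldr_nil, if_pos rfl]
      exact hBR
  · -- inductive case: i < i'
    have hA'eq : ∀ k, Rop i' s A k =
        if k = i' then insert s (A k) else if k = j then (A k).erase s else A k := by
      intro k
      rw [Rop, if_neg (by rw [hepsAs]; omega)]
      simp only [hepsAs]
    have hsAk : ∀ k, k ≠ j → s ∉ A k := fun k hk h =>
      Finset.disjoint_left.mp (hA.1 k j hk) h hsAj
    have hsA' : ∀ k, s ∈ Rop i' s A k ↔ k = i' := by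
      intro k
      rw [hA'eq]
      split_ifs with h1 h2
      · simp [h1]
      · simp [Finset.notMem_erase, h2]
        omega
      · simp [hsAk k h2, h1]
    have hdisA' : IsDissection d (Rop i' s A) := by
      refine ⟨?_, ?_, ?_⟩
      · intro a b hab
        rw [Finset.disjoint_left]
        intro x hxa hxb
        by_cases hxs : x = s
        · subst hxs
          exact hab (((hsA' a).mp hxa).trans ((hsA' b).mp hxb).symm)
        · exact Finset.disjoint_left.mp (hA.1 a b hab)
            ((mem_Rop_of_ne hxs a).mp hxa) ((mem_Rop_of_ne hxs b).mp hxb)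
      · intro k hk
        rw [hA'eq, if_neg (by omega), if_neg (by omega)]
        exact hA.2.1 k hk
      · intro x
        by_cases hxs : x = s
        · exact ⟨i', by rw [hxs, hsA']⟩
        · obtain ⟨m, hm⟩ := hA.2.2 x
          exact ⟨m, (mem_Rop_of_ne hxs m).mpr hm⟩
    have hsub' : DomD (Rop i' s A) B := by
      intro t x hx
      obtain ⟨m, hm, hxm⟩ := Finset.mem_biUnion.mp hx
      rw [Finset.mem_range] at hm
      by_cases hxs : x = s
      · subst hxs
        have : m = i' := (hsA' m).mp hxm
        exact Finset.mem_biUnion.mpr ⟨i', Finset.mem_range.mpr (by omega), hsBi'⟩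
      · exact hAB t (Finset.mem_biUnion.mpr
          ⟨m, Finset.mem_range.mpr hm, (mem_Rop_of_ne hxs m).mp hxm⟩)
    have hphi' : phi B = rho i i' (phi (Rop i' s A)) := by
      have hci' : phi (Rop i' s A) i' = phi A i' + 1 := by
        have he : Rop i' s A i' = insert s (A i') := by rw [hA'eq, if_pos rfl]
        simp only [phi, he, Finset.card_insert_of_notMem (hsAk i' (by omega))]
        push_cast
        ring
      have hcj : phi (Rop i' s A) j = phi A j - 1 := by
        have he : Rop i' s A j = (A j).erase s := by
          rw [hA'eq, if_neg (by omega : j ≠ i'), if_pos rfl]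
        simp only [phi, he, Finset.card_erase_of_mem hsAj]
        have : 1 ≤ (A j).card := Finset.card_pos.mpr ⟨s, hsAj⟩
        omega
      have hck : ∀ k, k ≠ i' → k ≠ j → phi (Rop i' s A) k = phi A k := by
        intro k h1 h2
        simp only [phi, hA'eq, if_neg h1, if_neg h2]
      funext k
      have h := congrFun hphi k
      simp only [rho, if_pos hij, if_pos hlt] at h ⊢
      by_cases h1 : k = i
      · rw [if_pos h1] at h ⊢
        rw [hck k (by omega) (by omega)]
        exact h
      · rw [if_neg h1] at h ⊢
        by_cases h2 : k = i'
        · rw [if_neg (by omega : ¬ k = j)] at h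
          rw [if_pos h2]
          rw [h2] at h ⊢
          rw [hci']
          linarith
        · rw [if_neg h2]
          by_cases h3 : k = j
          · rw [if_pos h3] at h
            rw [h3] at h ⊢
            rw [hcj]
            linarith
          · rw [if_neg h3] at h
            rw [hck k h2 h3]
            exact h
    obtain ⟨r', I', S', hr', hI0, hIr, hmono, heps', hmem', hfold⟩ :=
      ih i' hi'j (Rop i' s A) hdisA' hsub' i hlt (by omega) hphi'
    have hchain : ∀ m, m ≤ r' → ∀ k, k < m → I' k < I' m := by
      intro m
      induction m with
      | zero => omega
      | succ n ihn =>
        intro hn k hk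
        rcases Nat.lt_succ_iff_lt_or_eq.mp hk with h | h
        · exact lt_trans (ihn (by omega) k h) (hmono n (by omega))
        · exact h ▸ hmono n (by omega)
    have hSne : ∀ k, k < r' → S' k ≠ s := by
      intro k hk hks
      have h1 : I' k < i' := hIr ▸ hchain r' le_rfl k hk
      have h2 := hmem' k hk
      rw [hks] at h2
      exact Finset.disjoint_left.mp (hB.1 (I' k) i' (by omega)) h2 hsBi'
    refine ⟨r' + 1, fun k => if k = r' + 1 then j else I' k,
      fun k => if k = r' then s else S' k, by omega, ?_, by simp, ?_, ?_, ?_, ?_⟩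
    · simp only [if_neg (by omega : (0:ℕ) ≠ r' + 1)]
      exact hI0
    · intro k hk
      by_cases h : k = r'
      · subst h
        simp only [if_neg (by omega : k ≠ k + 1), if_pos rfl]
        exact hIr ▸ hi'j
      · simp only [if_neg (by omega : k ≠ r' + 1), if_neg (by omega : k + 1 ≠ r' + 1)]
        exact hmono k (by omega)
    · intro k hk
      by_cases h : k = r'
      · subst h
        simp only [if_pos rfl]
        exact hepsAs
      · simp only [if_neg h, if_neg (by omega : k + 1 ≠ r' + 1)]
        rw [show eps A (S' k) = eps (Rop i' s A) (S' k) from (eps_Rop_of_ne (hSne k (by omega))).symm]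
        exact heps' k (by omega)
    · intro k hk
      by_cases h : k = r'
      · subst h
        simp only [if_pos rfl, if_neg (by omega : k ≠ k + 1)]
        exact hIr ▸ hsBi'
      · simp only [if_neg h, if_neg (by omega : k ≠ r' + 1)]
        exact hmem' k (by omega)
    · rw [List.range_succ, List.map_append, List.foldr_append]
      have h2 : List.map (fun k => ((if k = r' + 1 then j else I' k : ℕ),
          if k = r' then s else S' k)) [r'] = [(i', s)] := by
        rw [List.map_cons, List.map_nil]
        rw [if_neg (by omega : ¬ r' = r' + 1), if_pos rfl, hIr]
      rw [h2]
      simp only [List.foldr_cons, List.foldr_nil]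
      have h3 : List.map (fun k => ((if k = r' + 1 then j else I' k : ℕ),
          if k = r' then s else S' k)) (List.range r') =
          List.map (fun k => (I' k, S' k)) (List.range r') := by
        apply List.map_congr_left
        intro k hk
        rw [List.mem_range] at hk
        rw [if_neg (by omega : ¬ k = r' + 1), if_neg (by omega : ¬ k = r')]
      rw [h3]
      exact hfold

/-- If `A < B` are ordered dissections with `φ(B) = ρ_{i,j} φ(A)` (`i < j`), then
`B = R_{i_1,s_1} ⋯ R_{i_r,s_r} A` for a chain `i = i_1 < i_2 < ⋯ < i_{r+1} = j`
and elements `s_κ` with `ε_A(s_κ) = i_{κ+1}`. -/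
theorem stmt11 (d : ℕ) (A B : ℕ → Finset (Fin d))
    (hA : IsDissection d A) (hB : IsDissection d B)
    (hAB : DomD A B) (hne : A ≠ B) (i j : ℕ) (hij : i < j) (hjd : j < d)
    (hphi : phi B = rho i j (phi A)) :
    ∃ (r : ℕ) (I : ℕ → ℕ) (S : ℕ → Fin d),
      1 ≤ r ∧ I 0 = i ∧ I r = j ∧ (∀ k < r, I k < I (k + 1)) ∧
      (∀ k < r, eps A (S k) = I (k + 1)) ∧
      B = ((List.range r).map (fun k => (I k, S k))).foldr
            (fun p C => Rop p.1 p.2 C) A := by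
  obtain ⟨r, I, S, h1, h2, h3, h4, h5, _, h7⟩ :=
    auxmain B hB j A hA hAB i hij hjd hphi
  exact ⟨r, I, S, h1, h2, h3, h4, h5, h7⟩
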